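/- arXiv:1009.3129 — 4 statements merged into one kernel-verified Lean document; each statement's English description precedes it below -/
import Mathlib

section
/- Let {M_i}_{i=1}^ℓ be a family of d×d matrices over F (F = ℝ or ℂ) that is irreducible, i.e., there is no nonzero proper linear subspace V of F^d with M_i V ⊆ V for all i. Then there exist D > 0 and k ∈ ℕ such that for any finite words I, J over {1,...,ℓ}, there exists a word K of length at most k with ‖M_{IKJ}‖ ≥ D ‖M_I‖ ‖M_J‖. -/
/-!
Unless all `M_i` vanish, irreducibility lets every pair of nonzero matrices `A, B` be bridged:
`A M_K B ≠ 0` for some nonempty word `K`. Indeed the vectors killed by every `A M_K` form an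
invariant subspace containing the range of `B`, so it is everything; then `A` kills the sum of
the ranges of the `M_i`, again a nonzero invariant subspace, so `A = 0`. Each condition
`A M_K B ≠ 0` is open, so by compactness of pairs of unit-norm matrices finitely many words
suffice, with a uniform lower bound on `‖A M_K B‖`; rescaling gives the claim for
`A = M_I`, `B = M_J`.
-/

open scoped Matrix.Norms.L2Operator

/-- A family of square matrices over `𝕜` is irreducible if no nonzero proper linear
subspace of `𝕜^d` is invariant under all of the matrices. -/
def IsIrreducibleFamily {𝕜 : Type*} [RCLike 𝕜] {n : Type*} [Fintype n] {ι : Type*}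
    (M : ι → Matrix n n 𝕜) : Prop :=
  ¬ ∃ V : Submodule 𝕜 (n → 𝕜), V ≠ ⊥ ∧ V ≠ ⊤ ∧ ∀ i, ∀ v ∈ V, (M i).mulVec v ∈ V

theorem IsCompact.exists_finset_forall_exists_le {X ι : Type*} [TopologicalSpace X]
    {s : Set X} (hs : IsCompact s) {f : ι → X → ℝ} (hf : ∀ i, Continuous (f i))
    (hpos : ∀ x ∈ s, ∃ i, 0 < f i x) :
    ∃ t : Finset ι, ∃ c > 0, ∀ x ∈ s, ∃ i ∈ t, c ≤ f i x := by
  obtain ⟨t, hst⟩ := hs.elim_finite_subcover (fun i ↦ {x | 0 < f i x})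
    (fun i ↦ isOpen_lt continuous_const (hf i)) fun x hx ↦ Set.mem_iUnion.2 (hpos x hx)
  rcases s.eq_empty_or_nonempty with rfl | ⟨x₀, hx₀⟩
  · exact ⟨∅, 1, one_pos, by simp⟩
  have ht : t.Nonempty := by
    obtain ⟨i, hi, -⟩ := Set.mem_iUnion₂.1 (hst hx₀)
    exact ⟨i, hi⟩
  have hsup_pos : ∀ x ∈ s, 0 < t.sup' ht (f · x) := fun x hx ↦ by
    obtain ⟨i, hi, hfi⟩ := Set.mem_iUnion₂.1 (hst hx)
    exact Finset.lt_sup'_iff ht |>.2 ⟨i, hi, hfi⟩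
  obtain ⟨c, hc, hcsup⟩ := hs.exists_forall_le'
    (Continuous.finset_sup'_apply ht fun i _ ↦ hf i).continuousOn hsup_pos
  refine ⟨t, c, hc, fun x hx ↦ ?_⟩
  obtain ⟨i, hi, hxi⟩ := t.exists_mem_eq_sup' ht (f · x)
  exact ⟨i, hi, hxi ▸ hcsup x hx⟩

section NormedAlgebra

variable {𝕜 R κ : Type*} [RCLike 𝕜] [NormedRing R] [NormedAlgebra 𝕜 R]

theorem norm_smul_mul_mul_smul (a b : 𝕜) (A X B : R) :
    ‖(a • A) * X * (b • B)‖ = ‖a‖ * ‖b‖ * ‖A * X * B‖ := by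
  rw [smul_mul_assoc, smul_mul_assoc, mul_smul_comm, smul_smul, norm_smul, norm_mul]

theorem exists_finset_forall_exists_le_norm_mul_mul [FiniteDimensional 𝕜 R] [Nonempty κ]
    (X : κ → R) (hX : ∀ A B : R, A ≠ 0 → B ≠ 0 → ∃ j, A * X j * B ≠ 0) :
    ∃ t : Finset κ, ∃ c > 0, ∀ A B : R, ∃ j ∈ t, c * ‖A‖ * ‖B‖ ≤ ‖A * X j * B‖ := by
  classical
  have : ProperSpace R := FiniteDimensional.proper 𝕜 R
  have hsphere : IsCompact (Metric.sphere (0 : R) 1 ×ˢ Metric.sphere (0 : R) 1) :=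
    (isCompact_sphere 0 1).prod (isCompact_sphere 0 1)
  obtain ⟨t, c, hc, ht⟩ := hsphere.exists_finset_forall_exists_le
    (f := fun j p ↦ ‖p.1 * X j * p.2‖) (fun j ↦ by fun_prop) fun p hp ↦ by
      simp only [Set.mem_prod, mem_sphere_zero_iff_norm] at hp
      obtain ⟨j, hj⟩ := hX p.1 p.2 (norm_ne_zero_iff.1 (by simp [hp.1]))
        (norm_ne_zero_iff.1 (by simp [hp.2]))
      exact ⟨j, norm_pos_iff.2 hj⟩
  refine ⟨insert (Classical.arbitrary κ) t, c, hc, fun A B ↦ ?_⟩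
  rcases eq_or_ne A 0 with rfl | hA
  · exact ⟨_, t.mem_insert_self _, by simp⟩
  rcases eq_or_ne B 0 with rfl | hB
  · exact ⟨_, t.mem_insert_self _, by simp⟩
  obtain ⟨j, hj, hle⟩ := ht ((‖A‖⁻¹ : 𝕜) • A, (‖B‖⁻¹ : 𝕜) • B)
    ⟨mem_sphere_zero_iff_norm.2 (norm_smul_inv_norm hA),
      mem_sphere_zero_iff_norm.2 (norm_smul_inv_norm hB)⟩
  refine ⟨j, Finset.mem_insert_of_mem hj, ?_⟩
  have hA' := norm_pos_iff.2 hA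
  have hB' := norm_pos_iff.2 hB
  simp only [norm_smul_mul_mul_smul, norm_inv, RCLike.norm_ofReal, abs_norm] at hle
  calc c * ‖A‖ * ‖B‖ ≤ ‖A‖⁻¹ * ‖B‖⁻¹ * ‖A * X j * B‖ * ‖A‖ * ‖B‖ := by gcongr
    _ = ‖A * X j * B‖ := by field_simp

end NormedAlgebra

namespace IsIrreducibleFamily

variable {𝕜 n ι : Type*} [RCLike 𝕜] [Fintype n] {M : ι → Matrix n n 𝕜}

theorem eq_bot_or_eq_top (hM : IsIrreducibleFamily M) {V : Submodule 𝕜 (n → 𝕜)}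
    (hV : ∀ i, ∀ v ∈ V, (M i).mulVec v ∈ V) : V = ⊥ ∨ V = ⊤ := by
  by_contra! h
  exact hM ⟨V, h.1, h.2, hV⟩

variable [DecidableEq n]

theorem eq_zero_of_forall_mul_eq_zero (hM : IsIrreducibleFamily M) (hne : ∃ i, M i ≠ 0)
    {A : Matrix n n 𝕜} (hA : ∀ i, A * M i = 0) : A = 0 := by
  set P := ⨆ i, LinearMap.range (Matrix.toLin' (M i))
  have hP : P = ⊤ := by
    refine (hM.eq_bot_or_eq_top fun i v _ ↦ ?_).resolve_left fun hbot ↦ ?_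
    · exact Submodule.mem_iSup_of_mem i ⟨v, rfl⟩
    · obtain ⟨i, hi⟩ := hne
      have hrange : LinearMap.range (Matrix.toLin' (M i)) ≤ P :=
        le_iSup (fun j ↦ LinearMap.range (Matrix.toLin' (M j))) i
      rw [hbot, le_bot_iff, LinearMap.range_eq_bot] at hrange
      exact hi (Matrix.toLin'.map_eq_zero_iff.1 hrange)
  have hker : P ≤ LinearMap.ker (Matrix.toLin' A) := iSup_le fun i ↦
    LinearMap.range_le_ker_iff.2 (by rw [← Matrix.toLin'_mul, hA i, map_zero])
  rw [hP, top_le_iff, LinearMap.ker_eq_top] at hker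
  exact Matrix.toLin'.map_eq_zero_iff.1 hker

theorem exists_word_mul_mul_ne_zero (hM : IsIrreducibleFamily M) (hne : ∃ i, M i ≠ 0)
    {A B : Matrix n n 𝕜} (hA : A ≠ 0) (hB : B ≠ 0) :
    ∃ K : List ι, K ≠ [] ∧ A * (K.map M).prod * B ≠ 0 := by
  by_contra! hAB
  set N := ⨅ (K : List ι) (_ : K ≠ []), LinearMap.ker (Matrix.toLin' (A * (K.map M).prod))
  have hN : N = ⊤ := by
    refine (hM.eq_bot_or_eq_top fun i v hv ↦ ?_).resolve_left fun hbot ↦ hB ?_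
    · simp only [N, Submodule.mem_iInf, LinearMap.mem_ker, Matrix.toLin'_apply] at hv ⊢
      intro K hK
      simpa [Matrix.mulVec_mulVec, mul_assoc] using hv (K ++ [i]) (by simp)
    · have hrange : LinearMap.range (Matrix.toLin' B) ≤ N := by
        simp only [N, le_iInf_iff]
        intro K hK
        exact LinearMap.range_le_ker_iff.2 (by rw [← Matrix.toLin'_mul, hAB K hK, map_zero])
      rw [hbot, le_bot_iff, LinearMap.range_eq_bot] at hrange
      exact Matrix.toLin'.map_eq_zero_iff.1 hrange
  refine hA (hM.eq_zero_of_forall_mul_eq_zero hne fun i ↦ Matrix.toLin'.map_eq_zero_iff.1 ?_)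
  have hi : N ≤ LinearMap.ker (Matrix.toLin' (A * ([i].map M).prod)) :=
    iInf₂_le [i] (List.cons_ne_nil _ _)
  rw [hN, top_le_iff, LinearMap.ker_eq_top] at hi
  simpa using hi

end IsIrreducibleFamily

/-- If `{M_i}_{i=1}^ℓ` is irreducible, then there are `D > 0` and `k ∈ ℕ` such that for
any nonempty words `I, J` there is a nonempty word `K` of length at most `k` with
`‖M_{IKJ}‖ ≥ D ‖M_I‖ ‖M_J‖`. -/
theorem irreducible_bridging (𝕜 : Type*) [RCLike 𝕜] (ℓ d : ℕ)
    (M : Fin ℓ → Matrix (Fin d) (Fin d) 𝕜)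
    (hirr : IsIrreducibleFamily M) :
    ∃ D : ℝ, 0 < D ∧ ∃ k : ℕ, 1 ≤ k ∧
      ∀ I J : List (Fin ℓ), I ≠ [] → J ≠ [] →
        ∃ K : List (Fin ℓ), 1 ≤ K.length ∧ K.length ≤ k ∧
          D * ‖(I.map M).prod‖ * ‖(J.map M).prod‖ ≤ ‖((I ++ K ++ J).map M).prod‖ := by
  by_cases hne : ∃ i, M i ≠ 0
  · obtain ⟨i, hi⟩ := hne
    have : Nonempty {K : List (Fin ℓ) // K ≠ []} := ⟨⟨[i], List.cons_ne_nil _ _⟩⟩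
    obtain ⟨t, D, hD, ht⟩ := exists_finset_forall_exists_le_norm_mul_mul (𝕜 := 𝕜)
      (fun K : {K : List (Fin ℓ) // K ≠ []} ↦ (K.1.map M).prod) fun A B hA hB ↦ by
        obtain ⟨K, hK, hAKB⟩ := hirr.exists_word_mul_mul_ne_zero ⟨i, hi⟩ hA hB
        exact ⟨⟨K, hK⟩, hAKB⟩
    refine ⟨D, hD, t.sup (·.1.length) + 1, by omega, fun I J _ _ ↦ ?_⟩
    obtain ⟨K, hK, hle⟩ := ht (I.map M).prod (J.map M).prod
    have hlen : K.1.length ≤ t.sup (·.1.length) := t.le_sup (f := (·.1.length)) hK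
    refine ⟨K.1, List.length_pos_iff.2 K.2, by omega, ?_⟩
    simpa only [List.map_append, List.prod_append] using hle
  · push Not at hne
    refine ⟨1, one_pos, 1, le_rfl, fun I J hI _ ↦ ⟨[I.head hI], by simp, by simp, ?_⟩⟩
    obtain ⟨a, I, rfl⟩ := List.exists_cons_of_ne_nil hI
    simp [hne a]
end

section
/- Under the assumptions of the previous proposition (T ergodic measure-preserving, f_n non-negative with f_{n+m}(x) ≤ f_m(x) f_n(T^m x) and sup f_1 < ∞, α = lim_n (1/n)∫ log f_n dμ), for any ε, N > 0 and μ-a.e. x ∈ X there exists C(x) > 0 such that f_n(T^m x) ≤ C(x) exp(n·max{α, −N}) exp((n+m)ε) for all n, m ∈ ℕ. -/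
open MeasureTheory Filter
open scoped ENNReal

/-- `log` with the convention `log x = -∞` for `x ≤ 0`. -/
noncomputable def elog (x : ℝ) : EReal := ENNReal.log (ENNReal.ofReal x)

/-- The positive part of an extended real, as an extended nonnegative real. -/
noncomputable def epos (e : EReal) : ℝ≥0∞ := if e = ⊤ then ⊤ else ENNReal.ofReal e.toReal

/-- Integral of an `EReal`-valued function (difference of the integrals of the positive
and negative parts), allowing the value `-∞`. -/
noncomputable def eintegral {X : Type*} [MeasurableSpace X] (μ : Measure X)
    (g : X → EReal) : EReal :=
  ((∫⁻ x, epos (g x) ∂μ : ℝ≥0∞) : EReal) - ((∫⁻ x, epos (-(g x)) ∂μ : ℝ≥0∞) : EReal)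

/-!
Put `g n = log (max (f n) (exp (-N n)))`. It is a subadditive cocycle with `|g n| ≤ c n`, so by
Fekete `∫ g n / n` converges to its infimum `λ`. The key ergodic input is a lower bound: almost
surely `liminf g n / n ≥ λ` (a Katznelson–Weiss covering argument plus the 0–1 law for the
invariant set `{liminf g n / n ≤ q}`). If `λ > -N` it shows that the cut-off at `-N` is eventually
invisible, whence `∫ log f n ≥ λ n` and `λ ≤ α`; in any case `λ ≤ max α (-N)`.

Now fix `k` with `∫ g k ≤ k (λ + ε)`. Cutting `[0, n)` into blocks of length `k`, at each of the
`k` offsets, bounds `k g n (T^m x)` by the Birkhoff sum of `g k` over `[m, m + n - k]`. Applied to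
`±` Birkhoff sums, the lower bound is the ergodic theorem for `g k`, so this sum is
`(n - k + 1) ∫ g k + o(n + m)`, uniformly in `n` and `m`.
-/

open Finset
open scoped Topology

lemma Finset.sum_range_sum_range_div {M : Type*} [AddCommMonoid M] (F : ℕ → M) {k n : ℕ}
    (hk : 1 ≤ k) (hkn : k ≤ n) :
    ∑ r ∈ range k, ∑ i ∈ range ((n - r) / k), F (r + i * k) = ∑ j ∈ range (n - k + 1), F j := by
  rw [Finset.sum_sigma']
  refine Finset.sum_nbij' (fun p => p.1 + p.2 * k) (fun j => ⟨j % k, j / k⟩) ?_ ?_ ?_ ?_ ?_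
  · rintro ⟨r, i⟩ hp
    simp only [mem_sigma, mem_range] at hp ⊢
    have := (Nat.le_div_iff_mul_le (by omega)).mp hp.2
    rw [Nat.succ_mul] at this
    omega
  · intro j hj
    simp only [mem_sigma, mem_range] at hj ⊢
    refine ⟨Nat.mod_lt _ (by omega), (Nat.le_div_iff_mul_le (by omega)).mpr ?_⟩
    have := Nat.mod_add_div' j k
    rw [Nat.succ_mul]
    omega
  · rintro ⟨r, i⟩ hp
    simp only [mem_sigma, mem_range] at hp
    simp only [Nat.add_mul_mod_self_right, Nat.mod_eq_of_lt hp.1,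
      Nat.add_mul_div_right _ _ (show 0 < k by omega), Nat.div_eq_of_lt hp.1, zero_add]
  · intro j _
    exact Nat.mod_add_div' j k
  · intro _ _
    rfl

def IsSubadditiveCocycle {X : Type*} (T : X → X) (g : ℕ → X → ℝ) : Prop :=
  ∀ m n : ℕ, 1 ≤ m → 1 ≤ n → ∀ x, g (n + m) x ≤ g m x + g n (T^[m] x)

section Cocycle

variable {X : Type*} {T : X → X}

lemma isSubadditiveCocycle_birkhoffSum (h : X → ℝ) :
    IsSubadditiveCocycle T (birkhoffSum T h) := fun m n _ _ x => by
  rw [add_comm n m, birkhoffSum_add]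

lemma isSubadditiveCocycle_neg_birkhoffSum (h : X → ℝ) :
    IsSubadditiveCocycle T (fun n x => -birkhoffSum T h n x) := fun m n _ _ x => by
  simp only [add_comm n m, birkhoffSum_add, neg_add, le_refl]

/-- The set where `liminf g n / n ≤ q`, phrased with rational `r` to make it measurable. -/
def lowerRateSet (g : ℕ → X → ℝ) (q : ℝ) : Set X :=
  {x | ∀ r : ℚ, q < r → ∃ᶠ n in atTop, g n x < r * n}

namespace IsSubadditiveCocycle

variable {g : ℕ → X → ℝ} {c : ℝ}

lemma le_add_mul_sub (hg : IsSubadditiveCocycle T g) (hc : ∀ n, 1 ≤ n → ∀ x, g n x ≤ c * n)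
    {m n : ℕ} (hm : 1 ≤ m) (hmn : m ≤ n) (y : X) : g n y ≤ g m y + c * ((n : ℝ) - m) := by
  rcases hmn.eq_or_lt with rfl | hlt
  · simp
  have h := hg m (n - m) hm (by omega) y
  rw [Nat.sub_add_cancel hmn] at h
  have := hc (n - m) (by omega) (T^[m] y)
  rw [Nat.cast_sub hmn] at this
  linarith

lemma le_mul_add (hg : IsSubadditiveCocycle T g) (hc : ∀ n, 1 ≤ n → ∀ x, g n x ≤ c * n)
    {r n : ℕ} (hrn : r < n) (y : X) : g n y ≤ c * r + g (n - r) (T^[r] y) := by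
  rcases Nat.eq_zero_or_pos r with rfl | hr
  · simp
  have h := hg r (n - r) hr (by omega) y
  rw [Nat.sub_add_cancel hrn.le] at h
  linarith [hc r hr y]

lemma le_sum_blocks (hg : IsSubadditiveCocycle T g) {k q : ℕ} (hk : 1 ≤ k) (hq : 1 ≤ q)
    (y : X) : g (q * k) y ≤ ∑ i ∈ range q, g k (T^[i * k] y) := by
  induction q, hq using Nat.le_induction with
  | base => simp
  | succ q hq ih =>
    have h := hg (q * k) k (Nat.mul_pos hq hk) hk y
    rw [add_comm, ← Nat.succ_mul] at h
    rw [sum_range_succ]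
    linarith

lemma le_add_sum_shifted_blocks (hg : IsSubadditiveCocycle T g)
    (hc : ∀ n, 1 ≤ n → ∀ x, g n x ≤ c * n) (hc0 : 0 ≤ c) {k n r : ℕ} (hk : 1 ≤ k) (hn : 1 ≤ n)
    (hr : r < k) (y : X) :
    g n y ≤ 2 * k * c + ∑ i ∈ range ((n - r) / k), g k (T^[r + i * k] y) := by
  set q := (n - r) / k
  have hqk : q * k + (n - r) % k = n - r := Nat.div_add_mod' (n - r) k
  have hmod : (n - r) % k < k := Nat.mod_lt _ (by omega)
  rcases Nat.eq_zero_or_pos q with hq | hq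
  · rw [hq, zero_mul, zero_add] at hqk
    rw [hq, sum_range_zero, add_zero]
    have hn2k : (n : ℝ) ≤ 2 * k := by norm_cast; omega
    nlinarith [hc n hn y]
  have hrn : r < n := by have := Nat.mul_pos hq hk; omega
  have hblocks := hg.le_sum_blocks hk hq (T^[r] y)
  simp only [← Function.iterate_add_apply, add_comm _ r] at hblocks
  have htail := hg.le_add_mul_sub hc (Nat.mul_pos hq hk) (show q * k ≤ n - r by omega) (T^[r] y)
  have hhead := hg.le_mul_add hc hrn y
  have hr' : (r : ℝ) ≤ k := by exact_mod_cast hr.le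
  have hs : ((n - r : ℕ) : ℝ) - (q * k : ℕ) ≤ k := by
    rw [← Nat.cast_sub (by omega)]; exact_mod_cast (show n - r - q * k ≤ k by omega)
  nlinarith

lemma mul_le_add_birkhoffSum (hg : IsSubadditiveCocycle T g)
    (hc : ∀ n, 1 ≤ n → ∀ x, g n x ≤ c * n) (hc0 : 0 ≤ c) {k n : ℕ} (hk : 1 ≤ k) (hkn : k ≤ n)
    (y : X) : k * g n y ≤ 2 * k ^ 2 * c + birkhoffSum T (g k) (n - k + 1) y := by
  have h := sum_le_sum fun r (hr : r ∈ range k) =>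
    hg.le_add_sum_shifted_blocks hc hc0 hk (by omega : 1 ≤ n) (mem_range.mp hr) y
  rw [sum_add_distrib, sum_range_sum_range_div (fun j => g k (T^[j] y)) hk hkn] at h
  simp only [sum_const, card_range, nsmul_eq_mul] at h
  rw [birkhoffSum]
  linarith

lemma le_add_birkhoffSum_indicator (hg : IsSubadditiveCocycle T g)
    (hc : ∀ n, 1 ≤ n → ∀ x, g n x ≤ c * n) {r K : ℝ} (hK : 0 ≤ K) (hcK : c ≤ r + K) (M : ℕ)
    {n : ℕ} (hn : 1 ≤ n) (x : X) :
    g n x ≤ r * n + birkhoffSum T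
      ({y | ∀ s, 1 ≤ s → s ≤ M → r * s ≤ g s y}.indicator fun _ => K) n x + M * K := by
  set E := {y | ∀ s, 1 ≤ s → s ≤ M → r * s ≤ g s y}
  have hc1 : ∀ x, g 1 x ≤ c := fun x => by simpa using hc 1 le_rfl x
  have hS : ∀ j z, 0 ≤ birkhoffSum T (E.indicator fun _ => K) j z := fun j z =>
    sum_nonneg fun i _ => Set.indicator_nonneg (fun _ _ => hK) _
  induction n using Nat.strong_induction_on generalizing x with
  | _ n ih =>
  by_cases hnM : n ≤ M
  · have : (n : ℝ) ≤ M := by exact_mod_cast hnM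
    nlinarith [hc n hn x, hS n x]
  by_cases hx : x ∈ E
  · rcases Nat.lt_or_ge 1 n with h1n | h1n
    · obtain ⟨n, rfl⟩ : ∃ n', n = n' + 1 := ⟨n - 1, by omega⟩
      have h := hg 1 n le_rfl (by omega) x
      have hTx := ih n (by omega) (by omega) (T x)
      rw [Function.iterate_one] at h
      rw [birkhoffSum_succ', Set.indicator_of_mem hx]
      push_cast
      linarith [hc1 x]
    · obtain rfl : n = 1 := by omega
      rw [birkhoffSum_one, Set.indicator_of_mem hx, Nat.cast_one]
      nlinarith [hc1 x]
  · simp only [E, Set.mem_ofPred_eq, not_forall, not_le] at hx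
    obtain ⟨s, hs1, hsM, hgs⟩ := hx
    have h := hg s (n - s) hs1 (by omega) x
    rw [Nat.sub_add_cancel (by omega)] at h
    have := ih (n - s) (by omega) (by omega) (T^[s] x)
    have hsplit := birkhoffSum_add T (E.indicator fun _ => K) s (n - s) x
    rw [Nat.add_sub_cancel' (by omega)] at hsplit
    rw [Nat.cast_sub (by omega)] at this
    nlinarith [hS s x]

lemma preimage_lowerRateSet_subset (hg : IsSubadditiveCocycle T g) (hg1 : ∀ x, g 1 x ≤ c)
    (q : ℝ) : T ⁻¹' lowerRateSet g q ⊆ lowerRateSet g q := by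
  intro x hx r hqr
  obtain ⟨r', hqr', hr'r⟩ := exists_rat_btwn hqr
  have hlarge : ∀ᶠ n : ℕ in atTop, 1 ≤ n ∧ c - r ≤ (r - r') * n :=
    (eventually_ge_atTop 1).and ((tendsto_natCast_atTop_atTop.const_mul_atTop
      (sub_pos.mpr hr'r)).eventually_ge_atTop (c - r))
  have hfreq := frequently_atTop.mp ((hx r' hqr').and_eventually hlarge)
  refine frequently_atTop.mpr fun a => ?_
  obtain ⟨n, han, hlt, hn1, hcn⟩ := hfreq a
  refine ⟨n + 1, by omega, ?_⟩
  have h := hg 1 n le_rfl hn1 x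
  rw [Function.iterate_one] at h
  push_cast
  linarith [hg1 x]

end IsSubadditiveCocycle

end Cocycle

lemma le_of_forall_mul_le_mul_add {t a b : ℝ} (h : ∀ n : ℕ, 1 ≤ n → t * n ≤ a * n + b) :
    t ≤ a := by
  by_contra! hlt
  obtain ⟨n, hn⟩ := exists_nat_gt (max (b / (t - a)) 1)
  have hn1 : 1 ≤ n := by exact_mod_cast (le_max_right _ _).trans hn.le
  have hb : b < (t - a) * n := (div_lt_iff₀' (sub_pos.mpr hlt)).mp ((le_max_left _ _).trans_lt hn)
  linarith [h n hn1]

lemma exists_forall_le_add_of_eventually_le {u v : ℕ → ℝ} (h : ∀ᶠ n in atTop, u n ≤ v n) :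
    ∃ D, ∀ n, u n ≤ D + v n := by
  obtain ⟨D, hD⟩ := (isBoundedUnder_of_eventually_le (a := 0)
    (h.mono fun n hn => sub_nonpos.mpr hn)).bddAbove_range
  exact ⟨D, fun n => by linarith [hD ⟨n, rfl⟩]⟩

lemma Subadditive.le_div_of_tendsto_le {u v : ℕ → ℝ} (hu : Subadditive u)
    (hbdd : BddBelow (Set.range fun n => u n / n)) {t : ℝ} (hv : Tendsto v atTop (𝓝 t))
    (hvu : ∀ᶠ n in atTop, v n ≤ u n / n) {n : ℕ} (hn : n ≠ 0) : t ≤ u n / n :=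
  (le_of_tendsto_of_tendsto hv (hu.tendsto_lim hbdd) hvu).trans (hu.lim_le_div hbdd hn)

section Ergodic

variable {X : Type*} [MeasurableSpace X] {μ : Measure X} {T : X → X}

lemma MeasureTheory.MeasurePreserving.integral_comp_of_aestronglyMeasurable {Y : Type*}
    [MeasurableSpace Y] {ν : Measure Y} {S : X → Y} (hS : MeasurePreserving S μ ν) {h : Y → ℝ}
    (hh : AEStronglyMeasurable h ν) : ∫ x, h (S x) ∂μ = ∫ y, h y ∂ν := by
  rw [← integral_map hS.measurable.aemeasurable (hS.map_eq ▸ hh), hS.map_eq]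

lemma MeasureTheory.MeasurePreserving.integrable_birkhoffSum (hT : MeasurePreserving T μ μ)
    {h : X → ℝ} (hh : Integrable h μ) (n : ℕ) : Integrable (birkhoffSum T h n) μ :=
  integrable_finsetSum _ fun i _ => ((hT.iterate i).integrable_comp hh.aestronglyMeasurable).mpr hh

lemma MeasureTheory.MeasurePreserving.integral_birkhoffSum (hT : MeasurePreserving T μ μ)
    {h : X → ℝ} (hh : Integrable h μ) (n : ℕ) :
    ∫ x, birkhoffSum T h n x ∂μ = n * ∫ x, h x ∂μ := by
  simp only [birkhoffSum]
  rw [integral_finsetSum (f := fun i x => h (T^[i] x)) _ fun i _ =>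
    ((hT.iterate i).integrable_comp hh.aestronglyMeasurable).mpr hh]
  simp [(hT.iterate _).integral_comp_of_aestronglyMeasurable hh.aestronglyMeasurable]

lemma Measurable.birkhoffSum {h : X → ℝ} (hh : Measurable h) (hT : Measurable T) (n : ℕ) :
    Measurable (birkhoffSum T h n) :=
  Finset.measurable_sum _ fun i _ => hh.comp (hT.iterate i)

lemma tendsto_measureReal_of_ae_eventually_notMem [IsFiniteMeasure μ] {A : ℕ → Set X}
    (hA : ∀ n, MeasurableSet (A n)) (h : ∀ᵐ x ∂μ, ∀ᶠ n in atTop, x ∉ A n) :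
    Tendsto (fun n => μ.real (A n)) atTop (𝓝 0) := by
  have := tendsto_measure_of_ae_tendsto_indicator_of_isFiniteMeasure atTop MeasurableSet.empty hA
    (h.mono fun x hx => hx.mono fun n hn => iff_of_false hn id)
  rw [measure_empty] at this
  exact (ENNReal.tendsto_toReal ENNReal.zero_ne_top).comp this

lemma integrable_of_abs_le [IsFiniteMeasure μ] {h : X → ℝ} (hh : Measurable h) {b : ℝ}
    (hb : ∀ x, |h x| ≤ b) : Integrable h μ :=
  .of_bound hh.aestronglyMeasurable b (.of_forall hb)

variable [IsProbabilityMeasure μ] {g : ℕ → X → ℝ} {c : ℝ}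

lemma measurableSet_lowerRateSet (hgm : ∀ n, Measurable (g n)) (q : ℝ) :
    MeasurableSet (lowerRateSet g q) := by
  have : lowerRateSet g q = ⋂ (r : ℚ) (_ : q < r), limsup (fun n => {x | g n x < r * n}) atTop := by
    ext x
    simp [lowerRateSet, mem_limsup_iff_frequently_mem]
  rw [this]
  exact .iInter fun r => .iInter fun _ =>
    MeasurableSet.measurableSet_limsup fun n => measurableSet_lt (hgm n) measurable_const

namespace IsSubadditiveCocycle

/-- Cover each orbit by blocks on which `g` grows at rate below `s`, paying `K` for every point
of the rare set `E M` where no such block of length at most `M` starts. -/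
lemma le_of_ae_exists_lt (hT : MeasurePreserving T μ μ) (hg : IsSubadditiveCocycle T g)
    (hgm : ∀ n, Measurable (g n)) (hbd : ∀ n, 1 ≤ n → ∀ x, |g n x| ≤ c * n) {t s : ℝ}
    (ht : ∀ n, 1 ≤ n → t * n ≤ ∫ x, g n x ∂μ) (hs : ∀ᵐ x ∂μ, ∃ n, 1 ≤ n ∧ g n x < s * n) :
    t ≤ s := by
  set E : ℕ → Set X := fun M => {y | ∀ n, 1 ≤ n → n ≤ M → s * n ≤ g n y}
  have hE : ∀ M, MeasurableSet (E M) := fun M => by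
    simp only [E, Set.ofPred_forall]
    exact .iInter fun n => .iInter fun _ => .iInter fun _ =>
      measurableSet_le measurable_const (hgm n)
  have hEμ : Tendsto (fun M => μ.real (E M)) atTop (𝓝 0) :=
    tendsto_measureReal_of_ae_eventually_notMem hE (hs.mono fun x ⟨n, hn, hlt⟩ =>
      (eventually_ge_atTop n).mono fun M hM hx => (hx n hn hM).not_gt hlt)
  set K := |c| + |s|
  have hK : 0 ≤ K := by positivity
  have hcK : c ≤ s + K := by linarith [le_abs_self c, neg_abs_le s]
  have hbound : ∀ M, t ≤ s + K * μ.real (E M) := fun M => by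
    refine le_of_forall_mul_le_mul_add (b := M * K) fun n hn => (ht n hn).trans ?_
    have hh : Integrable ((E M).indicator fun _ => K) μ := (integrable_const K).indicator (hE M)
    have hS := hT.integral_birkhoffSum hh n
    rw [integral_indicator_const K (hE M), smul_eq_mul] at hS
    calc ∫ x, g n x ∂μ
        ≤ ∫ x, (s * n + M * K + birkhoffSum T ((E M).indicator fun _ => K) n x) ∂μ :=
          integral_mono (integrable_of_abs_le (hgm n) (hbd n hn))
            ((integrable_const _).add (hT.integrable_birkhoffSum hh n)) fun x => by
              linarith [hg.le_add_birkhoffSum_indicator (fun n hn x => (le_abs_self _).trans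
                (hbd n hn x)) hK hcK M hn x]
      _ = (s + K * μ.real (E M)) * n + M * K := by
          rw [integral_add (integrable_const _) (hT.integrable_birkhoffSum hh n), hS]
          simp only [integral_const, probReal_univ, smul_eq_mul, one_mul]
          ring
  simpa using ge_of_tendsto (tendsto_const_nhds.add (hEμ.const_mul K)) (.of_forall hbound)

/-- Each `lowerRateSet g q` is `T`-invariant, hence null or conull, and conull is impossible for
`q < t` by `le_of_ae_exists_lt`. -/
lemma ae_eventually_le (hT : Ergodic T μ) (hg : IsSubadditiveCocycle T g)
    (hgm : ∀ n, Measurable (g n)) (hbd : ∀ n, 1 ≤ n → ∀ x, |g n x| ≤ c * n) {t : ℝ}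
    (ht : ∀ n, 1 ≤ n → t * n ≤ ∫ x, g n x ∂μ) :
    ∀ᵐ x ∂μ, ∀ ε > 0, ∀ᶠ n in atTop, (t - ε) * n ≤ g n x := by
  have hinv := hg.preimage_lowerRateSet_subset fun x => by
    simpa using (le_abs_self _).trans (hbd 1 le_rfl x)
  have hnull : ∀ q : ℚ, ∀ᵐ x ∂μ, (q : ℝ) < t → x ∉ lowerRateSet g q := by
    intro q
    by_cases hq : (q : ℝ) < t
    swap
    · exact .of_forall fun _ h => absurd h hq
    rcases hT.ae_empty_or_univ_of_preimage_ae_le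
      (measurableSet_lowerRateSet hgm q).nullMeasurableSet (hinv q).eventuallyLE with h | h
    · exact h.mem_iff.mono fun x hx _ hxB => Set.notMem_empty x (hx.mp hxB)
    refine absurd (le_of_forall_gt_imp_ge_of_dense fun s hs => ?_) (not_le.mpr hq)
    refine le_of_ae_exists_lt hT.toMeasurePreserving hg hgm hbd ht
      (h.mem_iff.mono fun x hx => ?_)
    obtain ⟨r, hqr, hrs⟩ := exists_rat_btwn hs
    obtain ⟨n, hlt, hn1⟩ := ((hx.mpr trivial r hqr).and_eventually (eventually_ge_atTop 1)).exists
    exact ⟨n, hn1, hlt.trans_le (mul_le_mul_of_nonneg_right hrs.le n.cast_nonneg)⟩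
  filter_upwards [ae_all_iff.mpr hnull] with x hx ε hε
  obtain ⟨q, hq1, hq2⟩ := exists_rat_btwn (show t - ε < t by linarith)
  have hxB := hx q hq2
  simp only [lowerRateSet, Set.mem_ofPred_eq, not_forall, not_frequently, not_lt] at hxB
  obtain ⟨r, hqr, hev⟩ := hxB
  exact hev.mono fun n hn => (mul_le_mul_of_nonneg_right (by linarith) n.cast_nonneg).trans hn

end IsSubadditiveCocycle

end Ergodic

section Birkhoff

variable {X : Type*} [MeasurableSpace X] {μ : Measure X} [IsProbabilityMeasure μ] {T : X → X}
  {c : ℝ}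

lemma ae_eventually_abs_birkhoffSum_sub_le (hT : Ergodic T μ) {h : X → ℝ} (hm : Measurable h)
    (hb : ∀ x, |h x| ≤ c) :
    ∀ᵐ x ∂μ, ∀ ε > 0, ∀ᶠ n in atTop, |birkhoffSum T h n x - n * ∫ y, h y ∂μ| ≤ ε * n := by
  have hint := integrable_of_abs_le (μ := μ) hm hb
  have hSm : ∀ n, Measurable (birkhoffSum T h n) := hm.birkhoffSum hT.measurable
  have hSb : ∀ n, 1 ≤ n → ∀ x, |birkhoffSum T h n x| ≤ c * n := fun n _ x =>
    (abs_sum_le_sum_abs _ _).trans (by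
      simpa [mul_comm] using sum_le_sum fun i (_ : i ∈ range n) => hb (T^[i] x))
  have hS := hT.integral_birkhoffSum hint
  have hup := (isSubadditiveCocycle_birkhoffSum h).ae_eventually_le hT hSm hSb
    fun n _ => by rw [hS, mul_comm]
  have hlow := (isSubadditiveCocycle_neg_birkhoffSum h).ae_eventually_le hT
    (fun n => (hSm n).neg) (by simpa only [abs_neg] using hSb) (t := -∫ y, h y ∂μ)
    fun n _ => by rw [integral_neg, hS, neg_mul, mul_comm]
  filter_upwards [hup, hlow] with x hup hlow ε hε
  filter_upwards [hup ε hε, hlow ε hε] with n hn₁ hn₂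
  rw [abs_le]
  constructor <;> linarith

variable {g : ℕ → X → ℝ}

/-- By `mul_le_add_birkhoffSum`, `k * g n (T^[m] x)` is bounded by a difference of two Birkhoff
sums of `g k` starting at `x`, which the ergodic theorem controls up to `o(n + m)`. -/
lemma IsSubadditiveCocycle.ae_exists_le_add (hT : Ergodic T μ) (hg : IsSubadditiveCocycle T g)
    (hgm : ∀ n, Measurable (g n)) (hbd : ∀ n, 1 ≤ n → ∀ x, |g n x| ≤ c * n) {k : ℕ}
    (hk : 1 ≤ k) {b : ℝ} (hb : ∫ x, g k x ∂μ ≤ k * b) {ε : ℝ} (hε : 0 < ε) :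
    ∀ᵐ x ∂μ, ∃ D, ∀ n m : ℕ, 1 ≤ n → g n (T^[m] x) ≤ D + n * b + (n + m) * ε := by
  set I := ∫ x, g k x ∂μ
  have hk0 : (0 : ℝ) < k := by exact_mod_cast hk
  filter_upwards [ae_eventually_abs_birkhoffSum_sub_le hT (hgm k) (hbd k hk)] with x hx
  obtain ⟨D, hD⟩ := exists_forall_le_add_of_eventually_le (hx (k * ε / 2) (by positivity))
  have hc0 : 0 ≤ c := by simpa using (abs_nonneg _).trans (hbd 1 le_rfl x)
  have hD0 : 0 ≤ D := by simpa using hD 0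
  have hI : |I| ≤ c * k := by
    simpa using norm_integral_le_of_norm_le_const (μ := μ)
      (.of_forall fun x => (Real.norm_eq_abs _).trans_le (hbd k hk x))
  have hgup : ∀ n, 1 ≤ n → ∀ y, g n y ≤ c * n := fun n hn y => (le_abs_self _).trans (hbd n hn y)
  refine ⟨3 * k * c + 2 * D / k + k * |b|, fun n m hn => ?_⟩
  have hnm : (0 : ℝ) ≤ (n + m) * ε := by positivity
  have hDk : 0 ≤ 2 * D / k := by positivity
  rcases lt_or_ge n k with hnk | hkn
  · have hnk' : (n : ℝ) ≤ k := by exact_mod_cast hnk.le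
    have hnb : -(k * |b|) ≤ n * b := by
      nlinarith [neg_abs_le b, abs_nonneg b, (Nat.cast_nonneg n : (0 : ℝ) ≤ n)]
    nlinarith [hgup n hn (T^[m] x)]
  have hblock := hg.mul_le_add_birkhoffSum hgup hc0 hk hkn (T^[m] x)
  rw [← add_sub_cancel_left (birkhoffSum T (g k) m x) (birkhoffSum T (g k) _ _),
    ← birkhoffSum_add] at hblock
  have hJ := (abs_le.mp (hD (m + (n - k + 1)))).2
  have hm' := (abs_le.mp (hD m)).1
  push_cast [hkn] at hJ
  have hnI : n * I ≤ n * (k * b) := mul_le_mul_of_nonneg_left hb n.cast_nonneg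
  have hkI : -((k - 1) * I) ≤ (k - 1) * (c * k) := by
    have : (0 : ℝ) ≤ k - 1 := by linarith [show (1 : ℝ) ≤ k by exact_mod_cast hk]
    nlinarith [neg_abs_le I]
  have hkε : k * ε / 2 * (n - k + 1 + 2 * m) ≤ k * ε / 2 * (2 * (n + m)) :=
    mul_le_mul_of_nonneg_left (by linarith [show (1 : ℝ) ≤ k by exact_mod_cast hk]) (by positivity)
  have hkey : k * g n (T^[m] x) ≤ k * (3 * k * c + 2 * D / k + k * |b| + n * b + (n + m) * ε) := by
    have : k * (2 * D / k) = 2 * D := by field_simp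
    nlinarith [abs_nonneg b]
  exact le_of_mul_le_mul_left hkey hk0

end Birkhoff

noncomputable def truncLog (a r : ℝ) : ℝ := Real.log (max r (Real.exp (-a)))

section TruncLog

variable {a a' b r s : ℝ}

lemma max_exp_neg_pos (a r : ℝ) : 0 < max r (Real.exp (-a)) :=
  (Real.exp_pos _).trans_le (le_max_right _ _)

lemma neg_le_truncLog (a r : ℝ) : -a ≤ truncLog a r := by
  simpa [truncLog] using Real.log_le_log (Real.exp_pos _) (le_max_right r (Real.exp (-a)))

lemma truncLog_le (hr : r ≤ Real.exp b) (hab : -a ≤ b) : truncLog a r ≤ b := by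
  rw [truncLog, Real.log_le_iff_le_exp (max_exp_neg_pos a r)]
  exact max_le hr (Real.exp_le_exp.mpr hab)

lemma le_exp_truncLog (a r : ℝ) : r ≤ Real.exp (truncLog a r) := by
  rw [truncLog, Real.exp_log (max_exp_neg_pos a r)]
  exact le_max_left _ _

lemma truncLog_mono (a : ℝ) : Monotone (truncLog a) := fun _ _ h =>
  Real.log_le_log (max_exp_neg_pos _ _) (max_le_max h le_rfl)

lemma truncLog_antitone (r : ℝ) : Antitone fun a => truncLog a r := fun _ _ h =>
  Real.log_le_log (max_exp_neg_pos _ _) (max_le_max le_rfl (Real.exp_le_exp.mpr (neg_le_neg h)))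

lemma truncLog_add_le (hs : 0 ≤ s) :
    truncLog (a + a') (r * s) ≤ truncLog a r + truncLog a' s := by
  rw [truncLog, truncLog, truncLog, ← Real.log_mul (max_exp_neg_pos a r).ne'
    (max_exp_neg_pos a' s).ne']
  refine Real.log_le_log (max_exp_neg_pos _ _) (max_le ?_ ?_)
  · exact mul_le_mul (le_max_left _ _) (le_max_left _ _) hs (max_exp_neg_pos a r).le
  · rw [neg_add, Real.exp_add]
    exact mul_le_mul (le_max_right _ _) (le_max_right _ _) (Real.exp_pos _).le
      (max_exp_neg_pos a r).le

lemma truncLog_eq_of_neg_lt (haa' : a ≤ a') (h : -a < truncLog a r) :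
    truncLog a' r = truncLog a r := by
  have hr : Real.exp (-a) < r := by
    by_contra! hr
    rw [truncLog, max_eq_right hr, Real.log_exp] at h
    exact h.false
  rw [truncLog, truncLog, max_eq_left hr.le,
    max_eq_left ((Real.exp_le_exp.mpr (neg_le_neg haa')).trans hr.le)]

lemma elog_of_pos (hr : 0 < r) : elog r = Real.log r :=
  ENNReal.log_ofReal_of_pos hr

lemma coe_truncLog (a r : ℝ) : (truncLog a r : EReal) = max (elog r) ((-a : ℝ) : EReal) := by
  rw [truncLog, ← elog_of_pos (max_exp_neg_pos a r), elog, ENNReal.ofReal_max,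
    ENNReal.log_monotone.map_max, ← elog, ← elog, elog_of_pos (Real.exp_pos _), Real.log_exp]

lemma epos_eq_toENNReal : epos = EReal.toENNReal := rfl

lemma monotone_epos : Monotone epos := fun _ _ h => EReal.toENNReal_le_toENNReal h

lemma ofReal_truncLog (ha : 0 ≤ a) (r : ℝ) :
    ENNReal.ofReal (truncLog a r) = epos (elog r) := by
  rw [← EReal.real_coe_toENNReal, ← epos_eq_toENNReal, coe_truncLog, monotone_epos.map_max,
    epos_eq_toENNReal, EReal.real_coe_toENNReal, ENNReal.ofReal_of_nonpos (by linarith),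
    max_eq_left zero_le]

lemma ofReal_neg_truncLog (a r : ℝ) :
    ENNReal.ofReal (-truncLog a r) = min (epos (-elog r)) (ENNReal.ofReal a) := by
  rw [← EReal.real_coe_toENNReal, ← epos_eq_toENNReal, EReal.coe_neg, coe_truncLog,
    EReal.neg_strictAnti.antitone.map_max, monotone_epos.map_min, ← EReal.coe_neg, neg_neg,
    epos_eq_toENNReal, EReal.real_coe_toENNReal]

end TruncLog

section EIntegral

variable {X : Type*} [MeasurableSpace X] {μ : Measure X} {F : X → ℝ} {b : ℝ}

lemma epos_elog_le {r : ℝ} (hr : r ≤ Real.exp b) : epos (elog r) ≤ ENNReal.ofReal b := by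
  rw [← EReal.real_coe_toENNReal, ← epos_eq_toENNReal, ← Real.log_exp b,
    ← elog_of_pos (Real.exp_pos b)]
  exact monotone_epos (ENNReal.log_monotone (ENNReal.ofReal_le_ofReal hr))

lemma Measurable.truncLog (hF : Measurable F) (a : ℝ) :
    Measurable fun x => truncLog a (F x) :=
  Real.measurable_log.comp (hF.max measurable_const)

lemma lintegral_epos_neg_elog_eq_iSup (hF : Measurable F) (a₀ : ℝ) :
    ∫⁻ x, epos (-elog (F x)) ∂μ = ⨆ j : ℕ, ∫⁻ x, ENNReal.ofReal (-truncLog (a₀ + j) (F x)) ∂μ := by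
  have hmeas : ∀ j : ℕ, Measurable fun x => ENNReal.ofReal (-truncLog (a₀ + j) (F x)) :=
    fun j => (hF.truncLog (a₀ + j)).neg.ennreal_ofReal
  have hmono : Monotone fun (j : ℕ) x => ENNReal.ofReal (-truncLog (a₀ + j) (F x)) :=
    fun i j hij x => ENNReal.ofReal_le_ofReal (neg_le_neg (truncLog_antitone _
      (by simpa using hij)))
  have htop : ⨆ j : ℕ, ENNReal.ofReal (a₀ + j) = ⊤ := by
    refine iSup_eq_top.mpr fun c hc => ?_
    obtain ⟨j, hj⟩ := exists_nat_gt (c.toReal - a₀)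
    exact ⟨j, (ENNReal.lt_ofReal_iff_toReal_lt hc.ne).mpr (by linarith)⟩
  rw [← lintegral_iSup hmeas hmono]
  refine lintegral_congr fun x => ?_
  simp only [ofReal_neg_truncLog]
  rw [← inf_iSup_eq, htop, inf_top_eq]

variable [IsProbabilityMeasure μ]

lemma lintegral_epos_elog_le (hF : ∀ x, F x ≤ Real.exp b) :
    ∫⁻ x, epos (elog (F x)) ∂μ ≤ ENNReal.ofReal b :=
  (lintegral_mono fun x => epos_elog_le (hF x)).trans (by simp)

lemma eintegral_elog_le (hb : 0 ≤ b) (hF : ∀ x, F x ≤ Real.exp b) :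
    eintegral μ (fun x => elog (F x)) ≤ b :=
  calc eintegral μ (fun x => elog (F x))
      ≤ ((∫⁻ x, epos (elog (F x)) ∂μ : ℝ≥0∞) : EReal) :=
        EReal.sub_le_of_le_add (le_add_of_nonneg_right (EReal.coe_ennreal_nonneg _))
    _ ≤ ((ENNReal.ofReal b : ℝ≥0∞) : EReal) :=
        EReal.coe_ennreal_le_coe_ennreal_iff.mpr (lintegral_epos_elog_le hF)
    _ = b := by rw [EReal.coe_ennreal_ofReal, max_eq_left hb]

lemma integrable_truncLog (hF : Measurable F) (hFb : ∀ x, F x ≤ Real.exp b) (a : ℝ) :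
    Integrable (fun x => truncLog a (F x)) μ := by
  refine integrable_of_abs_le (hF.truncLog a) (b := |a| + |b|)
    fun x => abs_le.mpr ⟨?_, ?_⟩
  · linarith [neg_le_truncLog a (F x), le_abs_self a, abs_nonneg b]
  · refine (truncLog_le ((hFb x).trans (Real.exp_le_exp.mpr (le_max_left b (-a))))
      (le_max_right _ _)).trans (max_le ?_ ?_) <;>
    linarith [le_abs_self b, neg_le_abs a, abs_nonneg a, abs_nonneg b]

/-- The positive parts of `truncLog a F` and `log F` agree, and by monotone convergence the
negative part of `log F` is the limit of those of `truncLog a F` as `a → ∞`. -/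
lemma le_eintegral_elog (hF : Measurable F) (hFb : ∀ x, F x ≤ Real.exp b) {a₀ t : ℝ}
    (ha₀ : 0 ≤ a₀) (ht : ∀ a, a₀ ≤ a → t ≤ ∫ x, truncLog a (F x) ∂μ) :
    (t : EReal) ≤ eintegral μ (fun x => elog (F x)) := by
  set P := ∫⁻ x, epos (elog (F x)) ∂μ
  set Q' : ℝ → ℝ≥0∞ := fun a => ∫⁻ x, ENNReal.ofReal (-truncLog a (F x)) ∂μ
  have hP : P ≠ ⊤ := ne_top_of_le_ne_top ENNReal.ofReal_ne_top (lintegral_epos_elog_le hFb)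
  have hQ' : ∀ a, Q' a ≠ ⊤ := fun a => ne_top_of_le_ne_top (ENNReal.ofReal_ne_top (r := a))
    ((lintegral_mono fun x => (ofReal_neg_truncLog a (F x)).trans_le (min_le_right _ _)).trans
      (by simp))
  have hsplit : ∀ a, a₀ ≤ a → t ≤ P.toReal - (Q' a).toReal := fun a ha => by
    have h := integral_eq_lintegral_pos_part_sub_lintegral_neg_part
      (integrable_truncLog (μ := μ) hF hFb a)
    rw [lintegral_congr fun x => ofReal_truncLog (ha₀.trans ha) (F x)] at h
    exact h ▸ ht a ha
  have hPt : 0 ≤ P.toReal - t := by linarith [hsplit a₀ le_rfl, (Q' a₀).toReal_nonneg]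
  have hQ : ∫⁻ x, epos (-elog (F x)) ∂μ ≤ ENNReal.ofReal (P.toReal - t) := by
    rw [lintegral_epos_neg_elog_eq_iSup hF a₀]
    refine iSup_le fun j => ?_
    change Q' (a₀ + j) ≤ _
    rw [← ENNReal.ofReal_toReal (hQ' _)]
    exact ENNReal.ofReal_le_ofReal (by linarith [hsplit (a₀ + j) (by simp)])
  unfold eintegral
  calc (t : EReal) = (P.toReal : EReal) - ((P.toReal - t : ℝ) : EReal) := by
        rw [← EReal.coe_sub, sub_sub_cancel]
    _ = (P : EReal) - ((ENNReal.ofReal (P.toReal - t) : ℝ≥0∞) : EReal) := by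
        rw [EReal.coe_ennreal_ofReal, max_eq_left hPt, EReal.coe_ennreal_toReal hP]
    _ ≤ _ := EReal.sub_le_sub le_rfl (EReal.coe_ennreal_le_coe_ennreal_iff.mpr hQ)

end EIntegral

section Submultiplicative

variable {X : Type*} {T : X → X} {f : ℕ → X → ℝ}

lemma le_exp_mul_log_max (hnonneg : ∀ n x, 0 ≤ f n x) {C : ℝ} (hC : ∀ x, f 1 x ≤ C)
    (hsub : ∀ m n : ℕ, 1 ≤ m → 1 ≤ n → ∀ x, f (n + m) x ≤ f m x * f n (T^[m] x))
    {n : ℕ} (hn : 1 ≤ n) (x : X) : f n x ≤ Real.exp (n * Real.log (max C 1)) := by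
  have hexp : Real.exp (Real.log (max C 1)) = max C 1 :=
    Real.exp_log (zero_lt_one.trans_le (le_max_right C 1))
  induction n, hn using Nat.le_induction generalizing x with
  | base => simpa [hexp] using (hC x).trans (le_max_left C 1)
  | succ n hn ih =>
    calc f (n + 1) x ≤ f 1 x * f n (T^[1] x) := hsub 1 n le_rfl hn x
      _ ≤ Real.exp (Real.log (max C 1)) * Real.exp (n * Real.log (max C 1)) :=
          mul_le_mul (hexp.symm ▸ (hC x).trans (le_max_left C 1)) (ih _) (hnonneg _ _)
            (by positivity)
      _ = Real.exp ((n + 1 : ℕ) * Real.log (max C 1)) := by rw [← Real.exp_add]; push_cast; ring_nf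

/-- The cocycle `log f n` with its growth rate cut off below at `-N`. -/
noncomputable def truncLogSeq (f : ℕ → X → ℝ) (N : ℝ) (n : ℕ) (x : X) : ℝ :=
  truncLog (N * n) (f n x)

lemma isSubadditiveCocycle_truncLogSeq (hnonneg : ∀ n x, 0 ≤ f n x)
    (hsub : ∀ m n : ℕ, 1 ≤ m → 1 ≤ n → ∀ x, f (n + m) x ≤ f m x * f n (T^[m] x)) (N : ℝ) :
    IsSubadditiveCocycle T (truncLogSeq f N) := fun m n hm hn x => by
  have h := (truncLog_mono _ (hsub m n hm hn x)).trans
    (truncLog_add_le (a := N * m) (a' := N * n) (hnonneg n (T^[m] x)))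
  simpa only [truncLogSeq, Nat.cast_add, mul_add, add_comm (N * n)] using h

variable {L N : ℝ}

lemma abs_truncLogSeq_le (hN : 0 ≤ N) (hL : 0 ≤ L)
    (hfL : ∀ n, 1 ≤ n → ∀ x, f n x ≤ Real.exp (n * L)) {n : ℕ} (hn : 1 ≤ n) (x : X) :
    |truncLogSeq f N n x| ≤ (N + L) * n := by
  have hlow := neg_le_truncLog (N * n) (f n x)
  have hup := truncLog_le (a := N * n) (hfL n hn x) (by nlinarith [n.cast_nonneg (α := ℝ)])
  rw [truncLogSeq, abs_le]
  constructor <;> nlinarith [n.cast_nonneg (α := ℝ)]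

variable [MeasurableSpace X] {μ : Measure X} [IsProbabilityMeasure μ]

lemma neg_mul_le_integral_truncLogSeq (hmeas : ∀ n, Measurable (f n)) (hN : 0 ≤ N) (hL : 0 ≤ L)
    (hfL : ∀ n, 1 ≤ n → ∀ x, f n x ≤ Real.exp (n * L)) (n : ℕ) :
    -(N * n) ≤ ∫ x, truncLogSeq f N n x ∂μ := by
  rcases Nat.eq_zero_or_pos n with rfl | hn
  · simpa using integral_nonneg fun x => by simpa [truncLogSeq] using neg_le_truncLog 0 (f 0 x)
  calc -(N * n) = ∫ _, -(N * n) ∂μ := by simp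
    _ ≤ ∫ x, truncLogSeq f N n x ∂μ :=
        integral_mono (integrable_const _)
          (integrable_of_abs_le ((hmeas n).truncLog _) (abs_truncLogSeq_le hN hL hfL hn))
          fun x => neg_le_truncLog _ _

lemma bddBelow_integral_truncLogSeq_div (hmeas : ∀ n, Measurable (f n)) (hN : 0 ≤ N)
    (hL : 0 ≤ L) (hfL : ∀ n, 1 ≤ n → ∀ x, f n x ≤ Real.exp (n * L)) :
    BddBelow (Set.range fun n : ℕ => (∫ x, truncLogSeq f N n x ∂μ) / n) := by
  refine ⟨-N, ?_⟩
  rintro _ ⟨n, rfl⟩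
  rcases Nat.eq_zero_or_pos n with rfl | hn
  · simpa using hN
  rw [le_div_iff₀ (by exact_mod_cast hn), neg_mul]
  exact neg_mul_le_integral_truncLogSeq hmeas hN hL hfL n

lemma subadditive_integral_truncLogSeq (hT : MeasurePreserving T μ μ)
    (hmeas : ∀ n, Measurable (f n)) (hnonneg : ∀ n x, 0 ≤ f n x)
    (hsub : ∀ m n : ℕ, 1 ≤ m → 1 ≤ n → ∀ x, f (n + m) x ≤ f m x * f n (T^[m] x))
    (hN : 0 ≤ N) (hL : 0 ≤ L) (hfL : ∀ n, 1 ≤ n → ∀ x, f n x ≤ Real.exp (n * L)) :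
    Subadditive fun n => ∫ x, truncLogSeq f N n x ∂μ := by
  have h0 := neg_mul_le_integral_truncLogSeq (μ := μ) hmeas hN hL hfL 0
  simp only [Nat.cast_zero, mul_zero, neg_zero] at h0
  intro m n
  rcases Nat.eq_zero_or_pos m with rfl | hm
  · simpa using h0
  rcases Nat.eq_zero_or_pos n with rfl | hn
  · simpa using h0
  have hint : ∀ k, 1 ≤ k → Integrable (truncLogSeq f N k) μ := fun k hk =>
    integrable_of_abs_le ((hmeas k).truncLog _) (abs_truncLogSeq_le hN hL hfL hk)
  have hcomp : Integrable (fun x => truncLogSeq f N n (T^[m] x)) μ :=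
    ((hT.iterate m).integrable_comp (hint n hn).aestronglyMeasurable).mpr (hint n hn)
  calc ∫ x, truncLogSeq f N (m + n) x ∂μ
      ≤ ∫ x, (truncLogSeq f N m x + truncLogSeq f N n (T^[m] x)) ∂μ :=
        integral_mono (hint _ (by omega)) ((hint m hm).add hcomp) fun x => by
          simpa only [add_comm n m] using
            isSubadditiveCocycle_truncLogSeq hnonneg hsub N m n hm hn x
    _ = _ := by
        rw [integral_add (hint m hm) hcomp,
          (hT.iterate m).integral_comp_of_aestronglyMeasurable (hint n hn).aestronglyMeasurable]

lemma integral_truncLogSeq_sub_le (hmeas : ∀ n, Measurable (f n)) (hN : 0 ≤ N) (hL : 0 ≤ L)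
    (hfL : ∀ n, 1 ≤ n → ∀ x, f n x ≤ Real.exp (n * L)) {N' s : ℝ} (hNN' : N ≤ N') (hsN : -N < s)
    {n : ℕ} (hn : 1 ≤ n) :
    ∫ x, truncLogSeq f N n x ∂μ - (N' + L) * n * μ.real {x | truncLogSeq f N n x < s * n}
      ≤ ∫ x, truncLogSeq f N' n x ∂μ := by
  set A := {x | truncLogSeq f N n x < s * n}
  have hAm : MeasurableSet A := measurableSet_lt ((hmeas n).truncLog _) measurable_const
  have hint : ∀ N'', 0 ≤ N'' → Integrable (truncLogSeq f N'' n) μ := fun N'' hN'' =>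
    integrable_of_abs_le ((hmeas n).truncLog _) (abs_truncLogSeq_le hN'' hL hfL hn)
  have hn' : (1 : ℝ) ≤ n := by exact_mod_cast hn
  suffices key : ∫ x, (truncLogSeq f N n x - A.indicator (fun _ => (N' + L) * n) x) ∂μ
      ≤ ∫ x, truncLogSeq f N' n x ∂μ by
    rw [integral_sub (hint N hN) ((integrable_const _).indicator hAm),
      integral_indicator_const _ hAm, smul_eq_mul] at key
    linarith
  refine integral_mono ((hint N hN).sub ((integrable_const _).indicator hAm))
    (hint N' (hN.trans hNN')) fun x => ?_
  by_cases hx : x ∈ A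
  · rw [Set.indicator_of_mem hx]
    have hup := truncLog_le (a := N * n) (hfL n hn x) (by nlinarith)
    have hlow := neg_le_truncLog (N' * n) (f n x)
    simp only [truncLogSeq] at hup hlow ⊢
    nlinarith
  · rw [Set.indicator_of_notMem hx, sub_zero]
    simp only [A, Set.mem_ofPred_eq, not_lt] at hx
    have hsN' : -(N * n) < s * n := by
      nlinarith [mul_pos (by linarith : 0 < s + N) (by linarith : (0 : ℝ) < n)]
    exact (truncLog_eq_of_neg_lt (mul_le_mul_of_nonneg_right hNN' n.cast_nonneg)
      (hsN'.trans_le hx)).ge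

end Submultiplicative

section Exponent

variable {X : Type*} [MeasurableSpace X] {μ : Measure X} [IsProbabilityMeasure μ] {T : X → X}
  {f : ℕ → X → ℝ} {L N : ℝ}

/-- Once the integrals grow at a rate `t > -N`, the cut-off at `-N` is almost surely invisible
for large `n` (by `ae_eventually_le`), so raising the level to `N'` costs `o(n)`; Fekete's lemma
turns this asymptotic bound into a bound for every `n`. -/
lemma mul_le_integral_truncLogSeq_of_le (hT : Ergodic T μ) (hmeas : ∀ n, Measurable (f n))
    (hnonneg : ∀ n x, 0 ≤ f n x)
    (hsub : ∀ m n : ℕ, 1 ≤ m → 1 ≤ n → ∀ x, f (n + m) x ≤ f m x * f n (T^[m] x))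
    (hN : 0 ≤ N) (hL : 0 ≤ L) (hfL : ∀ n, 1 ≤ n → ∀ x, f n x ≤ Real.exp (n * L)) {t : ℝ}
    (htN : -N < t) (ht : ∀ n, 1 ≤ n → t * n ≤ ∫ x, truncLogSeq f N n x ∂μ) {N' : ℝ}
    (hNN' : N ≤ N') {n : ℕ} (hn : 1 ≤ n) : t * n ≤ ∫ x, truncLogSeq f N' n x ∂μ := by
  set s := (t - N) / 2 with hs
  set A : ℕ → Set X := fun n => {x | truncLogSeq f N n x < s * n}
  have hgm : ∀ n, Measurable (truncLogSeq f N n) := fun n => (hmeas n).truncLog _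
  have hA : Tendsto (fun n => μ.real (A n)) atTop (𝓝 0) := by
    refine tendsto_measureReal_of_ae_eventually_notMem
      (fun n => measurableSet_lt (hgm n) measurable_const) ?_
    filter_upwards [(isSubadditiveCocycle_truncLogSeq hnonneg hsub N).ae_eventually_le hT hgm
      (fun n hn x => abs_truncLogSeq_le hN hL hfL hn x) ht] with x hx
    exact (hx ((t + N) / 2) (by linarith)).mono fun n hn hxA =>
      (show s * n ≤ truncLogSeq f N n x by convert hn using 2; ring).not_gt hxA
  have hlim : Tendsto (fun n => t - (N' + L) * μ.real (A n)) atTop (𝓝 t) := by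
    simpa using tendsto_const_nhds.sub (hA.const_mul (N' + L))
  have hle := (subadditive_integral_truncLogSeq hT.toMeasurePreserving hmeas hnonneg hsub
    (hN.trans hNN') hL hfL).le_div_of_tendsto_le (bddBelow_integral_truncLogSeq_div hmeas
    (hN.trans hNN') hL hfL) hlim ((eventually_ge_atTop 1).mono fun n hn => by
      rw [le_div_iff₀ (by exact_mod_cast hn)]
      linarith [integral_truncLogSeq_sub_le (μ := μ) hmeas hN hL hfL hNN'
        (show -N < s by linarith) hn, ht n hn]) (n := n) (by omega)
  rwa [le_div_iff₀ (by exact_mod_cast hn)] at hle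

lemma inv_mul_eintegral_elog_le (hL : 0 ≤ L) (hfL : ∀ n, 1 ≤ n → ∀ x, f n x ≤ Real.exp (n * L))
    {n : ℕ} (hn : 1 ≤ n) :
    (((n : ℝ)⁻¹ : ℝ) : EReal) * eintegral μ (fun x => elog (f n x)) ≤ L := by
  have hn' : (0 : ℝ) < n := by exact_mod_cast hn
  calc (((n : ℝ)⁻¹ : ℝ) : EReal) * eintegral μ (fun x => elog (f n x))
      ≤ (((n : ℝ)⁻¹ : ℝ) : EReal) * ((n * L : ℝ) : EReal) :=
        mul_le_mul_of_nonneg_left (eintegral_elog_le (by positivity) (hfL n hn))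
          (EReal.coe_nonneg.mpr (by positivity))
    _ = L := by rw [← EReal.coe_mul, inv_mul_cancel_left₀ hn'.ne']

lemma le_inv_mul_eintegral_elog (hmeas : ∀ n, Measurable (f n)) (hN : 0 ≤ N)
    (hfL : ∀ n, 1 ≤ n → ∀ x, f n x ≤ Real.exp (n * L)) {t : ℝ} {n : ℕ} (hn : 1 ≤ n)
    (ht : ∀ N', N ≤ N' → t * n ≤ ∫ x, truncLogSeq f N' n x ∂μ) :
    (t : EReal) ≤ (((n : ℝ)⁻¹ : ℝ) : EReal) * eintegral μ (fun x => elog (f n x)) := by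
  have hn' : (0 : ℝ) < n := by exact_mod_cast hn
  have h := le_eintegral_elog (μ := μ) (hmeas n) (hfL n hn) (a₀ := N * n) (by positivity)
    fun a ha => by
      simpa [truncLogSeq, div_mul_cancel₀ a hn'.ne'] using ht (a / n) ((le_div_iff₀ hn').mpr ha)
  calc (t : EReal) = (((n : ℝ)⁻¹ : ℝ) : EReal) * ((t * n : ℝ) : EReal) := by
        rw [← EReal.coe_mul, mul_comm t, inv_mul_cancel_left₀ hn'.ne']
    _ ≤ _ := mul_le_mul_of_nonneg_left h (EReal.coe_nonneg.mpr (by positivity))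

lemma le_toReal_of_coe_le {t : ℝ} {x : EReal} (hx : x ≠ ⊤) (h : (t : EReal) ≤ x) :
    t ≤ x.toReal := by
  simpa using EReal.toReal_le_toReal h (EReal.coe_ne_bot t) hx

lemma le_toReal_max_of_mul_le_integral (hT : Ergodic T μ) (hmeas : ∀ n, Measurable (f n))
    (hnonneg : ∀ n x, 0 ≤ f n x)
    (hsub : ∀ m n : ℕ, 1 ≤ m → 1 ≤ n → ∀ x, f (n + m) x ≤ f m x * f n (T^[m] x))
    (hN : 0 ≤ N) (hL : 0 ≤ L) (hfL : ∀ n, 1 ≤ n → ∀ x, f n x ≤ Real.exp (n * L)) {α : EReal}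
    (hα : Tendsto (fun n : ℕ => (((n : ℝ)⁻¹ : ℝ) : EReal) *
        eintegral μ (fun x => elog (f n x))) atTop (𝓝 α))
    {t : ℝ} (ht : ∀ n, 1 ≤ n → t * n ≤ ∫ x, truncLogSeq f N n x ∂μ) :
    t ≤ (max α ((-N : ℝ) : EReal)).toReal := by
  have hαL : α ≤ L := le_of_tendsto hα
    ((eventually_ge_atTop 1).mono fun n hn => inv_mul_eintegral_elog_le hL hfL hn)
  have hmax : max α ((-N : ℝ) : EReal) ≠ ⊤ :=
    ne_top_of_le_ne_top (EReal.coe_ne_top (max L (-N)))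
      (max_le (hαL.trans (EReal.coe_le_coe_iff.mpr (le_max_left _ _)))
        (EReal.coe_le_coe_iff.mpr (le_max_right _ _)))
  rcases le_or_gt t (-N) with htN | htN
  · exact htN.trans (le_toReal_of_coe_le hmax (le_max_right _ _))
  refine le_toReal_of_coe_le hmax (le_max_of_le_left (ge_of_tendsto hα
    ((eventually_ge_atTop 1).mono fun n hn => le_inv_mul_eintegral_elog hmeas hN hfL hn
      fun N' hNN' => ?_)))
  exact mul_le_integral_truncLogSeq_of_le hT hmeas hnonneg hsub hN hL hfL htN ht hNN' hn

end Exponent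

/-- Corollary 2.4: under the assumptions of Proposition 2.3, for any `ε, N > 0` and
a.e. `x` there is `C(x) > 0` such that
`f_n(T^m x) ≤ C(x) exp(n max{α, -N}) exp((n+m) ε)` for all `n, m`. -/
theorem subadditive_ergodic_uniform_bound {X : Type*} [MeasurableSpace X]
    (μ : Measure X) [IsProbabilityMeasure μ]
    (T : X → X) (hT : Ergodic T μ) (f : ℕ → X → ℝ)
    (hmeas : ∀ n, Measurable (f n)) (hnonneg : ∀ n x, 0 ≤ f n x)
    (C : ℝ) (hC : ∀ x, f 1 x ≤ C)
    (hsub : ∀ m n : ℕ, 1 ≤ m → 1 ≤ n → ∀ x, f (n + m) x ≤ f m x * f n (T^[m] x))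
    (α : EReal)
    (hα : Tendsto (fun n : ℕ => (((n : ℝ)⁻¹ : ℝ) : EReal) *
        eintegral μ (fun x => elog (f n x))) atTop (nhds α))
    (ε : ℝ) (hε : 0 < ε) (N : ℝ) (hN : 0 < N) :
    ∀ᵐ x ∂μ, ∃ Cx : ℝ, 0 < Cx ∧ ∀ n m : ℕ, 1 ≤ n → 1 ≤ m →
      f n (T^[m] x) ≤ Cx * Real.exp ((n : ℝ) * (max α ((-N : ℝ) : EReal)).toReal) *
        Real.exp (((n + m : ℕ) : ℝ) * ε) := by
  set L := Real.log (max C 1)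
  have hL : 0 ≤ L := Real.log_nonneg (le_max_right C 1)
  have hfL : ∀ n, 1 ≤ n → ∀ x, f n x ≤ Real.exp (n * L) := fun n hn x =>
    le_exp_mul_log_max hnonneg hC hsub hn x
  set β := (max α ((-N : ℝ) : EReal)).toReal
  have hu := subadditive_integral_truncLogSeq hT.toMeasurePreserving hmeas hnonneg hsub
    hN.le hL hfL
  have hbdd := bddBelow_integral_truncLogSeq_div (μ := μ) hmeas hN.le hL hfL
  have hlim : hu.lim ≤ β := le_toReal_max_of_mul_le_integral hT hmeas hnonneg hsub hN.le hL hfL hα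
    fun n hn => (le_div_iff₀ (by exact_mod_cast hn)).mp (hu.lim_le_div hbdd (by omega))
  obtain ⟨k, hkβ, hk⟩ := (((hu.tendsto_lim hbdd).eventually (gt_mem_nhds
    (show hu.lim < β + ε / 2 by linarith))).and (eventually_ge_atTop 1)).exists
  rw [div_lt_iff₀' (by exact_mod_cast hk)] at hkβ
  filter_upwards [(isSubadditiveCocycle_truncLogSeq hnonneg hsub N).ae_exists_le_add hT
    (fun n => (hmeas n).truncLog _) (fun n hn x => abs_truncLogSeq_le hN.le hL hfL hn x) hk
    hkβ.le (half_pos hε)] with x ⟨D, hD⟩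
  refine ⟨Real.exp D, Real.exp_pos D, fun n m hn _ => ?_⟩
  have hmε : 0 ≤ (m : ℝ) * ε := by positivity
  calc f n (T^[m] x) ≤ Real.exp (truncLogSeq f N n (T^[m] x)) := le_exp_truncLog _ _
    _ ≤ Real.exp (D + n * β + (n + m) * ε) := Real.exp_le_exp.mpr (by linarith [hD n m hn])
    _ = _ := by rw [← Real.exp_add, ← Real.exp_add]; push_cast; ring_nf
end

section
/- If {f_n(x)} is a submultiplicative sequence of functions on the full shift Σ (i.e., f_{n+m}(x) ≤ f_m(x) f_n(σ^m x)) with C = max{1, sup_x f_1(x)} < ∞, then for any n ≥ 2k, (f_n(x))^k ≤ C^{2k²} ∏_{j=0}^{n−k} f_k(σ^j x) for all x. -/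
/-!
Split `n = i + q k + r` with `0 ≤ i, r < k`. Submultiplicativity cuts `f_n(x)` into the `q` blocks
`f_k(σ^{i + t k} x)` and two end pieces of total length `i + r < 2k`, each bounded by a power of
`C`. Multiplying these `k` bounds over the residues `i = 0, …, k - 1` uses every `f_k(σ^j x)`,
`0 ≤ j ≤ n - k`, exactly once, with the factor `(C^{2k})^k = C^{2k²}` in front.
-/

/-- The shift map on the one-sided full shift `Σ = {1,…,ℓ}^ℕ`. -/
def shift (ℓ : ℕ) : (ℕ → Fin ℓ) → (ℕ → Fin ℓ) := fun x i => x (i + 1)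

open Finset

theorem Finset.prod_range_succ_filter_mod_eq {M : Type*} [CommMonoid M] (g : ℕ → M)
    {k i : ℕ} (hi : i < k) (m : ℕ) :
    ∏ j ∈ (range (m + 1)).filter (· % k = i), g j =
      ∏ t ∈ range ((m + k - i) / k), g (t * k + i) := by
  have hk : 0 < k := by omega
  have hfilter : (range (m + 1)).filter (· % k = i) =
      (range ((m + k - i) / k)).map ⟨(· * k + i), fun s t h => by simpa [hk.ne'] using h⟩ := by
    ext j
    simp only [mem_filter, mem_range, mem_map, Nat.lt_div_iff_mul_lt hk]
    constructor
    · rintro ⟨hj, rfl⟩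
      have := Nat.div_add_mod' j k
      exact ⟨j / k, by omega, this⟩
    · rintro ⟨t, ht, rfl⟩
      exact ⟨show t * k + i < m + 1 by omega, Nat.mul_add_mod_of_lt hi⟩
  rw [hfilter, prod_map]
  rfl

variable {X : Type*}

def Submultiplicative (T : X → X) (f : ℕ → X → ℝ) : Prop :=
  ∀ m n : ℕ, 1 ≤ m → 1 ≤ n → ∀ x, f (n + m) x ≤ f m x * f n (T^[m] x)

namespace Submultiplicative

variable {T : X → X} {f : ℕ → X → ℝ} {C : ℝ}

theorem le_pow (hf : Submultiplicative T f) (hnonneg : ∀ n x, 0 ≤ f n x)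
    (hC : ∀ x, f 1 x ≤ C) {m : ℕ} (hm : 1 ≤ m) (x : X) : f m x ≤ C ^ m := by
  induction m, hm using Nat.le_induction generalizing x with
  | base => simpa using hC x
  | succ m hm ih =>
    calc f (m + 1) x ≤ f 1 x * f m (T^[1] x) := hf 1 m le_rfl hm x
      _ ≤ C * C ^ m := mul_le_mul (hC x) (ih _) (hnonneg _ _) ((hnonneg 1 x).trans (hC x))
      _ = C ^ (m + 1) := (pow_succ' C m).symm

theorem le_prod_iterate (hf : Submultiplicative T f) (hnonneg : ∀ n x, 0 ≤ f n x)
    {k : ℕ} (hk : 1 ≤ k) {q : ℕ} (hq : 1 ≤ q) (x : X) :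
    f (q * k) x ≤ ∏ t ∈ range q, f k (T^[t * k] x) := by
  induction q, hq using Nat.le_induction generalizing x with
  | base => simp
  | succ q hq ih =>
    calc f ((q + 1) * k) x = f (k + q * k) x := by rw [add_mul, one_mul, add_comm]
      _ ≤ f (q * k) x * f k (T^[q * k] x) := hf _ _ (Nat.mul_le_mul hq hk) hk x
      _ ≤ (∏ t ∈ range q, f k (T^[t * k] x)) * f k (T^[q * k] x) :=
        mul_le_mul_of_nonneg_right (ih x) (hnonneg _ _)
      _ = ∏ t ∈ range (q + 1), f k (T^[t * k] x) := (prod_range_succ _ _).symm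

theorem le_pow_mul (hf : Submultiplicative T f) (hnonneg : ∀ n x, 0 ≤ f n x)
    (hC : ∀ x, f 1 x ≤ C) (a : ℕ) {b : ℕ} (hb : 1 ≤ b) (x : X) :
    f (a + b) x ≤ C ^ a * f b (T^[a] x) := by
  rcases Nat.eq_zero_or_pos a with rfl | ha
  · simp
  calc f (a + b) x = f (b + a) x := by rw [add_comm]
    _ ≤ f a x * f b (T^[a] x) := hf a b ha hb x
    _ ≤ C ^ a * f b (T^[a] x) :=
      mul_le_mul_of_nonneg_right (hf.le_pow hnonneg hC ha x) (hnonneg _ _)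

theorem le_mul_pow (hf : Submultiplicative T f) (hnonneg : ∀ n x, 0 ≤ f n x)
    (hC : ∀ x, f 1 x ≤ C) {a : ℕ} (ha : 1 ≤ a) (c : ℕ) (x : X) :
    f (a + c) x ≤ f a x * C ^ c := by
  rcases Nat.eq_zero_or_pos c with rfl | hc
  · simp
  calc f (a + c) x = f (c + a) x := by rw [add_comm]
    _ ≤ f a x * f c (T^[a] x) := hf a c ha hc x
    _ ≤ f a x * C ^ c := mul_le_mul_of_nonneg_left (hf.le_pow hnonneg hC hc _) (hnonneg _ _)

theorem le_pow_mul_prod (hf : Submultiplicative T f) (hnonneg : ∀ n x, 0 ≤ f n x)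
    (hC : ∀ x, f 1 x ≤ C) {k i n : ℕ} (hk : 1 ≤ k) (hkn : k + i ≤ n) (x : X) :
    f n x ≤ C ^ (i + (n - i) % k) * ∏ t ∈ range ((n - i) / k), f k (T^[t * k + i] x) := by
  have hdiv := Nat.div_add_mod' (n - i) k
  set q := (n - i) / k
  set r := (n - i) % k
  have hn : n = i + (q * k + r) := by omega
  have hq : 1 ≤ q := (Nat.le_div_iff_mul_le hk).2 (by omega)
  have hqk : 1 ≤ q * k := Nat.mul_le_mul hq hk
  have hC0 : 0 ≤ C := (hnonneg 1 x).trans (hC x)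
  calc f n x = f (i + (q * k + r)) x := by rw [← hn]
    _ ≤ C ^ i * (f (q * k) (T^[i] x) * C ^ r) :=
      (hf.le_pow_mul hnonneg hC i (b := q * k + r) (by omega) x).trans
        (mul_le_mul_of_nonneg_left (hf.le_mul_pow hnonneg hC hqk r _)
          (pow_nonneg hC0 i))
    _ = C ^ (i + r) * f (q * k) (T^[i] x) := by ring
    _ ≤ C ^ (i + r) * ∏ t ∈ range q, f k (T^[t * k] (T^[i] x)) :=
      mul_le_mul_of_nonneg_left (hf.le_prod_iterate hnonneg hk hq _) (pow_nonneg hC0 _)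
    _ = C ^ (i + r) * ∏ t ∈ range q, f k (T^[t * k + i] x) := by
      simp only [← Function.iterate_add_apply]

end Submultiplicative

/-- Lemma 2.2 of Cao–Feng–Huang: for a submultiplicative sequence of nonnegative
functions on the full shift with `C = max{1, sup f₁} < ∞`, one has
`(f_n(x))^k ≤ C^(2k²) ∏_{j=0}^{n-k} f_k(σ^j x)` for all `n ≥ 2k` and all `x`. -/
theorem submultiplicative_power_bound (ℓ : ℕ) (f : ℕ → (ℕ → Fin ℓ) → ℝ)
    (hnonneg : ∀ n x, 0 ≤ f n x)
    (hsub : ∀ m n : ℕ, 1 ≤ m → 1 ≤ n → ∀ x, f (n + m) x ≤ f m x * f n ((shift ℓ)^[m] x))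
    (C : ℝ) (hC1 : 1 ≤ C) (hC : ∀ x, f 1 x ≤ C)
    (k : ℕ) (hk : 1 ≤ k) (n : ℕ) (hn : 2 * k ≤ n) (x : ℕ → Fin ℓ) :
    (f n x) ^ k ≤ C ^ (2 * k ^ 2) *
      ∏ j ∈ Finset.range (n - k + 1), f k ((shift ℓ)^[j] x) := by
  set g := fun j => f k ((shift ℓ)^[j] x)
  have hresidue : ∀ i ∈ range k,
      f n x ≤ C ^ (2 * k) * ∏ j ∈ (range (n - k + 1)).filter (· % k = i), g j := by
    intro i hi
    have hi := mem_range.1 hi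
    have hkin : k + i ≤ n := by omega
    rw [prod_range_succ_filter_mod_eq g hi, show n - k + k - i = n - i by omega]
    refine (Submultiplicative.le_pow_mul_prod hsub hnonneg hC hk hkin x).trans ?_
    refine mul_le_mul_of_nonneg_right (pow_le_pow_right₀ hC1 ?_) (prod_nonneg fun _ _ ↦ hnonneg _ _)
    have := Nat.mod_lt (n - i) (by omega : 0 < k)
    omega
  calc (f n x) ^ k = ∏ _i ∈ range k, f n x := by rw [prod_const, card_range]
    _ ≤ ∏ i ∈ range k, C ^ (2 * k) * ∏ j ∈ (range (n - k + 1)).filter (· % k = i), g j :=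
      prod_le_prod (fun _ _ ↦ hnonneg n x) hresidue
    _ = C ^ (2 * k ^ 2) * ∏ j ∈ range (n - k + 1), g j := by
      rw [prod_mul_distrib, prod_const, card_range, ← pow_mul,
        prod_fiberwise_of_maps_to fun j _ ↦ mem_range.2 (Nat.mod_lt j (by omega))]
      ring
end

section
/- The equality M_*(μ) = max{A_*^{(j)}(μ) : j ∈ Λ} can fail for non-ergodic invariant measures: for M_1 = diag(1,2), M_2 = diag(3,2) on the full 2-shift, with μ = p·δ_{1^∞} + (1−p)·δ_{2^∞}, 0 < p < 1, one has M_*(μ) = p log 2 + (1−p) log 3, while A_*^{(1)}(μ) = (1−p) log 3 and A_*^{(2)}(μ) = log 2, so M_*(μ) > max{A_*^{(1)}(μ), A_*^{(2)}(μ)}. -/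
open MeasureTheory Filter
open scoped ENNReal Matrix.Norms.L2Operator NNReal

/-- The cylinder set `[J]` of a word `J` of length `n`. -/
def cyl {ℓ n : ℕ} (J : Fin n → Fin ℓ) : Set (ℕ → Fin ℓ) := {x | ∀ i : Fin n, x i = J i}

/-- The product `N_J = N_{j_1} ⋯ N_{j_n}` for a word `J`. -/
noncomputable def wordProd {𝕜 : Type*} [RCLike 𝕜] {ℓ : ℕ} {m : Type*} [Fintype m] [DecidableEq m]
    (N : Fin ℓ → Matrix m m 𝕜) {n : ℕ} (J : Fin n → Fin ℓ) : Matrix m m 𝕜 :=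
  (List.ofFn fun i => N (J i)).prod

/-- The sequence whose limit is the Lyapunov exponent
`N_*(μ) = lim (1/n) ∑_{J ∈ Σ_n} μ([J]) log ‖N_J‖ ∈ ℝ ∪ {-∞}`. -/
noncomputable def lyapSeq {𝕜 : Type*} [RCLike 𝕜] {ℓ : ℕ} {m : Type*} [Fintype m]
    [DecidableEq m] (N : Fin ℓ → Matrix m m 𝕜) (μ : Measure (ℕ → Fin ℓ)) (n : ℕ) :
    EReal :=
  (((n : ℝ)⁻¹ : ℝ) : EReal) *
    ∑ J : Fin n → Fin ℓ, (((μ (cyl J)).toReal : ℝ) : EReal) * elog ‖wordProd N J‖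

/-- The sequence whose limit is the entropy of `μ` for the full shift:
`h(μ) = lim -(1/n) ∑_{J ∈ Σ_n} μ([J]) log μ([J])`. -/
noncomputable def entSeq {ℓ : ℕ} (μ : Measure (ℕ → Fin ℓ)) (n : ℕ) : ℝ :=
  (n : ℝ)⁻¹ * -∑ J : Fin n → Fin ℓ, (μ (cyl J)).toReal * Real.log (μ (cyl J)).toReal

/-- The sequence whose limit is the pressure `P(q) = lim (1/n) log ∑_{J} ‖N_J‖^q`. -/
noncomputable def pressSeq {𝕜 : Type*} [RCLike 𝕜] {ℓ : ℕ} {m : Type*} [Fintype m]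
    [DecidableEq m] (N : Fin ℓ → Matrix m m 𝕜) (q : ℝ) (n : ℕ) : EReal :=
  (((n : ℝ)⁻¹ : ℝ) : EReal) * elog (∑ J : Fin n → Fin ℓ, ‖wordProd N J‖ ^ q)

/-- A `q`-equilibrium state of a pressure value `p`: a shift-invariant Borel
probability measure `μ` with `p = q N_*(μ) + h(μ)`. -/
def IsEquilibriumState {𝕜 : Type*} [RCLike 𝕜] {ℓ : ℕ} {m : Type*} [Fintype m]
    [DecidableEq m] (N : Fin ℓ → Matrix m m 𝕜) (q p : ℝ)
    (μ : Measure (ℕ → Fin ℓ)) : Prop :=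
  IsProbabilityMeasure μ ∧ MeasurePreserving (shift ℓ) μ μ ∧
    ∃ (L : EReal) (h : ℝ), Tendsto (lyapSeq N μ) atTop (nhds L) ∧
      Tendsto (entSeq μ) atTop (nhds h) ∧
      (p : EReal) = ((q : ℝ) : EReal) * L + ((h : ℝ) : EReal)

/-- The `(j,j)` diagonal block of `T⁻¹ M T` for the block structure given by `b`. -/
noncomputable def diagBlock {𝕜 : Type*} [RCLike 𝕜] {d t : ℕ} (b : Fin d → Fin t)
    (N : Matrix (Fin d) (Fin d) 𝕜) (j : Fin t) :
    Matrix {x : Fin d // b x = j} {x : Fin d // b x = j} 𝕜 :=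
  Matrix.of fun a c => N a.1 c.1


/-! Both Lyapunov sequences are affine in the measure, and on `δ_{i^∞}` they equal
`(1/n) log ‖N_i^n‖`, which for a diagonal matrix is the logarithm of its largest entry in
absolute value. Hence `M_*(μ) = p log 2 + (1-p) log 3`: each Dirac mass sees the dominant entry of
its own matrix. The `1×1` blocks only see a fixed diagonal position, and the dominant entries of
`M₁` and `M₂` sit in different positions, so neither block exponent reaches `M_*(μ)`. -/

theorem pi_norm_pow {ι 𝕜 : Type*} [Fintype ι] [Nonempty ι] [NormedDivisionRing 𝕜]
    (v : ι → 𝕜) (k : ℕ) : ‖v ^ k‖ = ‖v‖ ^ k := by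
  obtain ⟨i, hi⟩ := (IsGreatest.pi_norm v).1
  refine le_antisymm ((pi_norm_le_iff_of_nonneg (by positivity)).2 fun j => ?_) ?_
  · rw [Pi.pow_apply, norm_pow]
    exact pow_le_pow_left₀ (norm_nonneg _) (norm_le_pi_norm v j) k
  · rw [← hi, ← norm_pow, ← Pi.pow_apply]
    exact norm_le_pi_norm _ i

namespace Matrix

variable {𝕜 n : Type*} [RCLike 𝕜] [Fintype n] [DecidableEq n]

theorem l2_opNorm_diagonal_pow [Nonempty n] (v : n → 𝕜) (k : ℕ) : ‖diagonal v ^ k‖ = ‖v‖ ^ k := by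
  rw [diagonal_pow, l2_opNorm_diagonal, pi_norm_pow]

theorem l2_opNorm_of_const_pow [Unique n] (x : 𝕜) (k : ℕ) :
    ‖(of fun _ _ => x : Matrix n n 𝕜) ^ k‖ = ‖x‖ ^ k := by
  have : (of fun _ _ => x : Matrix n n 𝕜) = diagonal fun _ => x := by
    ext i j
    simp [Subsingleton.elim i j]
  rw [this, l2_opNorm_diagonal_pow, pi_norm_const]

end Matrix

theorem EReal.mul_sum_of_nonneg_of_ne_top {ι : Type*} {x : EReal} (hx : 0 ≤ x) (hx' : x ≠ ⊤)
    (s : Finset ι) (f : ι → EReal) : x * ∑ i ∈ s, f i = ∑ i ∈ s, x * f i :=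
  map_sum ({ toFun := (x * ·), map_zero' := mul_zero x
             map_add' := left_distrib_of_nonneg_of_ne_top hx hx' } : EReal →+ EReal) f s

theorem elog_pow {x : ℝ} (hx : 0 < x) (n : ℕ) : elog (x ^ n) = ((n * Real.log x : ℝ) : EReal) := by
  rw [elog, ENNReal.log_ofReal_of_pos (pow_pos hx n), Real.log_pow]

section Cylinders

variable {ℓ n : ℕ}

theorem mem_cyl_iff (x : ℕ → Fin ℓ) (J : Fin n → Fin ℓ) : x ∈ cyl J ↔ (fun i : Fin n => x i) = J :=
  funext_iff.symm

theorem measurableSet_cyl (J : Fin n → Fin ℓ) : MeasurableSet (cyl J) := by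
  have : cyl J = ⋂ i : Fin n, (fun x : ℕ → Fin ℓ => x i) ⁻¹' {J i} := by
    ext x
    simp [cyl]
  rw [this]
  exact .iInter fun i => measurable_pi_apply _ (measurableSet_singleton _)

theorem dirac_apply_cyl (x : ℕ → Fin ℓ) (J : Fin n → Fin ℓ) :
    Measure.dirac x (cyl J) = if (fun i : Fin n => x i) = J then 1 else 0 := by
  rw [Measure.dirac_apply' _ (measurableSet_cyl J)]
  simp [Set.indicator, mem_cyl_iff]

end Cylinders

theorem wordProd_const {𝕜 : Type*} [RCLike 𝕜] {ℓ : ℕ} {m : Type*} [Fintype m] [DecidableEq m]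
    (N : Fin ℓ → Matrix m m 𝕜) (n : ℕ) (a : Fin ℓ) :
    wordProd N (fun _ : Fin n => a) = N a ^ n := by
  simp [wordProd, List.ofFn_const, List.prod_replicate]

section Lyapunov

variable {𝕜 : Type*} [RCLike 𝕜] {ℓ : ℕ} {m : Type*} [Fintype m] [DecidableEq m]
  (N : Fin ℓ → Matrix m m 𝕜)

theorem lyapSeq_add (μ ν : Measure (ℕ → Fin ℓ)) [IsFiniteMeasure μ] [IsFiniteMeasure ν] (n : ℕ) :
    lyapSeq N (μ + ν) n = lyapSeq N μ n + lyapSeq N ν n := by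
  simp only [lyapSeq, Measure.add_apply,
    ENNReal.toReal_add (measure_ne_top μ _) (measure_ne_top ν _), EReal.coe_add]
  rw [← EReal.left_distrib_of_nonneg_of_ne_top (EReal.coe_nonneg.2 (by positivity))
    (EReal.coe_ne_top _), ← Finset.sum_add_distrib]
  congr 1
  exact Finset.sum_congr rfl fun J _ => EReal.right_distrib_of_nonneg
    (EReal.coe_nonneg.2 ENNReal.toReal_nonneg) (EReal.coe_nonneg.2 ENNReal.toReal_nonneg)

theorem lyapSeq_smul (c : ℝ≥0∞) (μ : Measure (ℕ → Fin ℓ)) (n : ℕ) :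
    lyapSeq N (c • μ) n = (c.toReal : EReal) * lyapSeq N μ n := by
  simp only [lyapSeq, Measure.smul_apply, smul_eq_mul, ENNReal.toReal_mul, EReal.coe_mul,
    mul_assoc]
  rw [← EReal.mul_sum_of_nonneg_of_ne_top (EReal.coe_nonneg.2 ENNReal.toReal_nonneg)
    (EReal.coe_ne_top _), mul_left_comm]

theorem lyapSeq_dirac (x : ℕ → Fin ℓ) (n : ℕ) :
    lyapSeq N (Measure.dirac x) n =
      (((n : ℝ)⁻¹ : ℝ) : EReal) * elog ‖wordProd N (fun i : Fin n => x i)‖ := by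
  simp only [lyapSeq, dirac_apply_cyl, apply_ite ENNReal.toReal, apply_ite ((↑) : ℝ → EReal),
    ENNReal.toReal_one, ENNReal.toReal_zero, EReal.coe_one, EReal.coe_zero, ite_mul, one_mul,
    zero_mul, Finset.sum_ite_eq, Finset.mem_univ, if_true]

theorem lyapSeq_dirac_const {a : Fin ℓ} {r : ℝ} (hr : 0 < r) {n : ℕ} (hn : n ≠ 0)
    (hN : ‖N a ^ n‖ = r ^ n) : lyapSeq N (Measure.dirac fun _ => a) n = (Real.log r : EReal) := by
  rw [lyapSeq_dirac, wordProd_const, hN, elog_pow hr, ← EReal.coe_mul, inv_mul_cancel_left₀]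
  exact Nat.cast_ne_zero.2 hn

theorem tendsto_lyapSeq_two_dirac_const {a b : Fin ℓ} {r s : ℝ} (hr : 0 < r) (hs : 0 < s)
    (hNa : ∀ n, ‖N a ^ n‖ = r ^ n) (hNb : ∀ n, ‖N b ^ n‖ = s ^ n) {c d : ℝ} (hc : 0 ≤ c)
    (hd : 0 ≤ d) :
    Tendsto (lyapSeq N (ENNReal.ofReal c • Measure.dirac (fun _ => a) +
      ENNReal.ofReal d • Measure.dirac (fun _ => b))) atTop
      (nhds ((c * Real.log r + d * Real.log s : ℝ) : EReal)) := by
  have := (Measure.dirac fun _ : ℕ => a).smul_finite (ENNReal.ofReal_ne_top (r := c))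
  have := (Measure.dirac fun _ : ℕ => b).smul_finite (ENNReal.ofReal_ne_top (r := d))
  refine tendsto_const_nhds.congr' ?_
  filter_upwards [eventually_ne_atTop 0] with n hn
  rw [lyapSeq_add, lyapSeq_smul, lyapSeq_smul,
    lyapSeq_dirac_const N hr hn (hNa n), lyapSeq_dirac_const N hs hn (hNb n),
    ENNReal.toReal_ofReal hc, ENNReal.toReal_ofReal hd]
  norm_cast

end Lyapunov

/-- Remark 1.8: the equality `M_*(μ) = max{A_*^{(j)}(μ)}` can fail for non-ergodic
invariant measures. For `M₁ = diag(1,2)`, `M₂ = diag(3,2)` and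
`μ = p δ_{1^∞} + (1-p) δ_{2^∞}` with `0 < p < 1`, one has
`M_*(μ) = p log 2 + (1-p) log 3`, `A_*^{(1)}(μ) = (1-p) log 3`,
`A_*^{(2)}(μ) = log 2`, and `M_*(μ) > max{A_*^{(1)}(μ), A_*^{(2)}(μ)}`. -/
theorem nonergodic_counterexample (p : ℝ) (hp0 : 0 < p) (hp1 : p < 1)
    (M : Fin 2 → Matrix (Fin 2) (Fin 2) ℝ)
    (hM : M = ![Matrix.diagonal ![1, 2], Matrix.diagonal ![3, 2]])
    (A1 A2 : Fin 2 → Matrix (Fin 1) (Fin 1) ℝ)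
    (hA1 : A1 = fun i => Matrix.of fun _ _ => M i 0 0)
    (hA2 : A2 = fun i => Matrix.of fun _ _ => M i 1 1)
    (μ : Measure (ℕ → Fin 2))
    (hμ : μ = ENNReal.ofReal p • Measure.dirac (fun _ => 0) +
      ENNReal.ofReal (1 - p) • Measure.dirac (fun _ => 1)) :
    Tendsto (lyapSeq M μ) atTop
      (nhds ((p * Real.log 2 + (1 - p) * Real.log 3 : ℝ) : EReal)) ∧
    Tendsto (lyapSeq A1 μ) atTop (nhds (((1 - p) * Real.log 3 : ℝ) : EReal)) ∧
    Tendsto (lyapSeq A2 μ) atTop (nhds ((Real.log 2 : ℝ) : EReal)) ∧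
    max ((1 - p) * Real.log 3) (Real.log 2) <
      p * Real.log 2 + (1 - p) * Real.log 3 := by
  subst hμ hA1 hA2 hM
  have hq : 0 ≤ 1 - p := sub_nonneg.2 hp1.le
  refine ⟨?_, ?_, ?_, ?_⟩
  · exact tendsto_lyapSeq_two_dirac_const _ two_pos three_pos
      (fun k => by norm_num [Matrix.l2_opNorm_diagonal_pow, Pi.norm_def, Fin.univ_succ])
      (fun k => by norm_num [Matrix.l2_opNorm_diagonal_pow, Pi.norm_def, Fin.univ_succ]) hp0.le hq
  · simpa using tendsto_lyapSeq_two_dirac_const _ one_pos three_pos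
      (fun k => by simp [Matrix.l2_opNorm_of_const_pow])
      (fun k => by simp [Matrix.l2_opNorm_of_const_pow]) hp0.le hq
  · rw [show Real.log 2 = p * Real.log 2 + (1 - p) * Real.log 2 by ring]
    exact tendsto_lyapSeq_two_dirac_const _ two_pos two_pos
      (fun k => by simp [Matrix.l2_opNorm_of_const_pow])
      (fun k => by simp [Matrix.l2_opNorm_of_const_pow]) hp0.le hq
  · have hlog2 : 0 < Real.log 2 := Real.log_pos one_lt_two
    have hlog23 : Real.log 2 < Real.log 3 := Real.log_lt_log two_pos (by norm_num)
    exact max_lt (by nlinarith) (by nlinarith)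
end
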